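/- Correctness of the controllability-verification algorithm: Let G = (X, x0, Σ, δ, ρ) be a PDES with controllable events Σc and uncontrollable events Σuc, and H = (Q, q0, Σ, δH, ρH) a probabilistic automaton with L_H ⊆ L_G, and let G_tc be the associated controllability-testing automaton. Then L_H is not probabilistic controllable w.r.t. G and Σc if and only if the state d of G_tc is reachable from the initial state (x0, q0). -/

import Mathlib

open scoped BigOperators

noncomputable section

/-- Chain product: given step weights `w s σ` (interpreted as the conditional
probability of event `σ` after string `s`), `chainProd w pre rest` multiplies the
weights along `rest`, starting from the already-consumed prefix `pre`. -/
def chainProd {E : Type*} (w : List E → E → ℝ) : List E → List E → ℝ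
  | _, [] => 1
  | pre, σ :: rest => w pre σ * chainProd w (pre ++ [σ]) rest

/-- The (probabilistic) language generated by step weights `w`:
`langOf w [] = 1` and `langOf w (s ++ [σ]) = langOf w s * w s σ`. -/
def langOf {E : Type*} (w : List E → E → ℝ) : List E → ℝ := chainProd w []

/-- A probabilistic language over a finite event set `E`. -/
structure PLang (E : Type*) [Fintype E] where
  toFun : List E → ℝ
  nonneg : ∀ s, 0 ≤ toFun s
  le_one : ∀ s, toFun s ≤ 1
  eps : toFun [] = 1
  step : ∀ s, (∑ σ : E, toFun (s ++ [σ])) ≤ toFun s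

/-- `L1` is a probabilistic sublanguage of `L2`. -/
def PSub {E : Type*} (L1 L2 : List E → ℝ) : Prop :=
  (∀ s, 0 < L1 s → 0 < L2 s) ∧
  ∀ s, 0 < L1 s → ∀ σ : E, L1 (s ++ [σ]) / L1 s ≤ L2 (s ++ [σ]) / L2 s

/-- Intersection of probabilistic languages. -/
def pInter {E : Type*} (L1 L2 : List E → ℝ) : List E → ℝ :=
  langOf fun s σ => min (L1 (s ++ [σ]) / L1 s) (L2 (s ++ [σ]) / L2 s)

/-- Natural projection erasing the events outside the observable set `So`. -/
def proj {E : Type*} [DecidableEq E] (So : Finset E) (s : List E) : List E :=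
  s.filter fun σ => decide (σ ∈ So)

/-- A probabilistic discrete event system (probabilistic automaton). -/
structure PDES (X : Type*) (E : Type*) [Fintype E] where
  x0 : X
  trans : X → E → Option X
  prob : X → E → ℝ
  prob_nonneg : ∀ x σ, 0 ≤ prob x σ
  prob_le_one : ∀ x σ, prob x σ ≤ 1
  prob_pos_iff : ∀ x σ, 0 < prob x σ ↔ (trans x σ).isSome
  sum_le_one : ∀ x, (∑ σ : E, prob x σ) ≤ 1

/-- Extension of the partial transition function to strings. -/
def PDES.transStar {X E : Type*} [Fintype E] (G : PDES X E) (s : List E) : Option X :=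
  s.foldl (fun ox σ => ox.bind fun x => G.trans x σ) (some G.x0)

/-- Step weight of a PDES: `ρ(δ(x0,s),σ)` when `δ(x0,s)` is defined, `0` otherwise. -/
def PDES.w {X E : Type*} [Fintype E] (G : PDES X E) (s : List E) (σ : E) : ℝ :=
  (G.transStar s).elim 0 fun x => G.prob x σ

/-- The probabilistic language generated by a PDES. -/
def PDES.lang {X E : Type*} [Fintype E] (G : PDES X E) : List E → ℝ := langOf G.w

/-- The set of control patterns: subsets of events containing every uncontrollable event. -/
def ControlPatterns {E : Type*} [Fintype E] [DecidableEq E] (Sc : Finset E) :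
    Finset (Finset E) :=
  Finset.univ.filter fun θ => Scᶜ ⊆ θ

/-- `Sp` is a probabilistic P-supervisor for `G`: to every observation of a string in the
support of `L_G` it assigns a probability distribution on the control patterns. -/
def IsSupervisor {X E : Type*} [Fintype E] [DecidableEq E] (G : PDES X E)
    (Sc So : Finset E) (Sp : List E → Finset E → ℝ) : Prop :=
  ∀ s : List E, 0 < G.lang s →
    (∀ θ ∈ ControlPatterns Sc, 0 ≤ Sp (proj So s) θ) ∧
    (∑ θ ∈ ControlPatterns Sc, Sp (proj So s) θ) = 1

/-- The controlled probabilistic language `L_{Sp/G}`. -/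
def supLang {X E : Type*} [Fintype E] [DecidableEq E] (G : PDES X E)
    (Sc So : Finset E) (Sp : List E → Finset E → ℝ) : List E → ℝ :=
  langOf fun s σ =>
    G.w s σ * ∑ θ ∈ (ControlPatterns Sc).filter (fun θ => σ ∈ θ), Sp (proj So s) θ

/-- `K` is a scaling-factor function for `G`: on every observation of a string in the
support of `L_G` it takes values in `[0,1]` and equals `1` on uncontrollable events. -/
def IsScaling {X E : Type*} [Fintype E] [DecidableEq E] (G : PDES X E)
    (Sc So : Finset E) (K : List E → E → ℝ) : Prop :=
  ∀ s : List E, 0 < G.lang s → ∀ σ : E,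
    0 ≤ K (proj So s) σ ∧ K (proj So s) σ ≤ 1 ∧ (σ ∉ Sc → K (proj So s) σ = 1)

/-- The controlled probabilistic language `L_{K/G}`. -/
def kLang {X E : Type*} [Fintype E] [DecidableEq E] (G : PDES X E)
    (So : Finset E) (K : List E → E → ℝ) : List E → ℝ :=
  langOf fun s σ => G.w s σ * K (proj So s) σ

/-- Probabilistic controllability (language form). -/
def ProbControllable {E : Type*} (L M : List E → ℝ) (Sc : Finset E) : Prop :=
  ∀ s : List E, 0 < L s → ∀ σ : E, σ ∉ Sc →
    L (s ++ [σ]) / L s = M (s ++ [σ]) / M s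

/-- Probabilistic observability (language form). -/
def ProbObservable {E : Type*} [DecidableEq E] (L M : List E → ℝ)
    (Sc So : Finset E) : Prop :=
  ∀ s1 s2 : List E, 0 < L s1 → 0 < L s2 → proj So s1 = proj So s2 →
    ∀ σ ∈ Sc,
      (M (s1 ++ [σ]) / M s1) * (L (s2 ++ [σ]) / L s2) =
      (M (s2 ++ [σ]) / M s2) * (L (s1 ++ [σ]) / L s1)

/-- Probabilistic controllability (automata form). -/
def AutControllable {X Q E : Type*} [Fintype E] (G : PDES X E) (H : PDES Q E)
    (Sc : Finset E) : Prop :=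
  ∀ s : List E, 0 < H.lang s → ∀ x q,
    G.transStar s = some x → H.transStar s = some q →
    ∀ σ : E, σ ∉ Sc → H.prob q σ = G.prob x σ

/-- Probabilistic observability (automata form). -/
def AutObservable {X Q E : Type*} [Fintype E] [DecidableEq E] (G : PDES X E)
    (H : PDES Q E) (Sc So : Finset E) : Prop :=
  ∀ s1 s2 : List E, 0 < H.lang s1 → 0 < H.lang s2 → proj So s1 = proj So s2 →
    ∀ x1 q1 x2 q2,
      G.transStar s1 = some x1 → H.transStar s1 = some q1 →
      G.transStar s2 = some x2 → H.transStar s2 = some q2 →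
      ∀ σ ∈ Sc, G.prob x1 σ * H.prob q2 σ = G.prob x2 σ * H.prob q1 σ

/-- Reachability in the controllability-testing automaton `G_tc`.
States are pairs `(x,q)` (as `Sum.inl`) together with the special state `d` (`Sum.inr ()`). -/
inductive TcReach {X Q E : Type*} [Fintype E] (G : PDES X E) (H : PDES Q E)
    (Sc : Finset E) : (X × Q) ⊕ Unit → Prop
  | init : TcReach G H Sc (Sum.inl (G.x0, H.x0))
  | good (x q x' q' σ) : TcReach G H Sc (Sum.inl (x, q)) →
      G.trans x σ = some x' → H.trans q σ = some q' →
      ((σ ∉ Sc ∧ G.prob x σ = H.prob q σ) ∨ σ ∈ Sc) →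
      TcReach G H Sc (Sum.inl (x', q'))
  | bad (x q σ) : TcReach G H Sc (Sum.inl (x, q)) →
      σ ∉ Sc → G.prob x σ ≠ H.prob q σ →
      TcReach G H Sc (Sum.inr ())

/-- Reachability in the observability-testing automaton `G_to`.
States are 4-tuples `(x1,q1,x2,q2)` (as `Sum.inl`) together with the special state `d`. -/
inductive ToReach {X Q E : Type*} [Fintype E] (G : PDES X E) (H : PDES Q E)
    (Sc So : Finset E) : (X × Q × X × Q) ⊕ Unit → Prop
  | init : ToReach G H Sc So (Sum.inl (G.x0, H.x0, G.x0, H.x0))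
  | sync (x1 q1 x2 q2 x1' q1' x2' q2' σ) :
      ToReach G H Sc So (Sum.inl (x1, q1, x2, q2)) →
      G.trans x1 σ = some x1' → H.trans q1 σ = some q1' →
      G.trans x2 σ = some x2' → H.trans q2 σ = some q2' →
      (σ ∉ Sc ∨ (σ ∈ Sc ∧ G.prob x1 σ * H.prob q2 σ = G.prob x2 σ * H.prob q1 σ)) →
      ToReach G H Sc So (Sum.inl (x1', q1', x2', q2'))
  | bad (x1 q1 x2 q2 σ) :
      ToReach G H Sc So (Sum.inl (x1, q1, x2, q2)) →
      σ ∈ Sc → G.prob x1 σ * H.prob q2 σ ≠ G.prob x2 σ * H.prob q1 σ →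
      ToReach G H Sc So (Sum.inr ())
  | left (x1 q1 x2 q2 x1' q1' σ) :
      ToReach G H Sc So (Sum.inl (x1, q1, x2, q2)) → σ ∉ So →
      G.trans x1 σ = some x1' → H.trans q1 σ = some q1' →
      ToReach G H Sc So (Sum.inl (x1', q1', x2, q2))
  | right (x1 q1 x2 q2 x2' q2' σ) :
      ToReach G H Sc So (Sum.inl (x1, q1, x2, q2)) → σ ∉ So →
      G.trans x2 σ = some x2' → H.trans q2 σ = some q2' →
      ToReach G H Sc So (Sum.inl (x1, q1, x2', q2'))

/-- `H` is a probabilistic subautomaton of `G`, as witnessed by the state inclusion `e`. -/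
def SubautomatonVia {Q X E : Type*} [Fintype E] (H : PDES Q E) (G : PDES X E)
    (e : Q → X) : Prop :=
  Function.Injective e ∧ e H.x0 = G.x0 ∧
  ∀ q σ, H.prob q σ ≤ G.prob (e q) σ ∧
    ∀ q', H.trans q σ = some q' → G.trans (e q) σ = some (e q')

/-- The product of two PDESs. -/
def PDES.prod {X Q E : Type*} [Fintype E] (G : PDES X E) (H : PDES Q E) :
    PDES (X × Q) E where
  x0 := (G.x0, H.x0)
  trans := fun p σ => (G.trans p.1 σ).bind fun x => (H.trans p.2 σ).map fun q => (x, q)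
  prob := fun p σ => min (G.prob p.1 σ) (H.prob p.2 σ)
  prob_nonneg := fun p σ => le_min (G.prob_nonneg _ _) (H.prob_nonneg _ _)
  prob_le_one := fun p σ => le_trans (min_le_left _ _) (G.prob_le_one _ _)
  prob_pos_iff := by
    intro p σ
    rw [lt_min_iff, G.prob_pos_iff, H.prob_pos_iff]
    cases hG : G.trans p.1 σ <;> cases hH : H.trans p.2 σ <;> simp [hG, hH]
  sum_le_one := fun p =>
    le_trans (Finset.sum_le_sum fun σ _ => min_le_left _ _) (G.sum_le_one p.1)

end

/-!
Every pair reachable in `G_tc` is `(δ(x₀,s), δ_H(q₀,s))` for some string `s`, and `s ∈ supp(L_H)`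
because `ρ_H` is positive on defined transitions; so a transition into `d` exhibits a violation of
controllability. Conversely, running `G_tc` along a string `s` defined in both automata either
reaches the pair `(δ(x₀,s), δ_H(q₀,s))` or has already entered `d`, so a violation after `s`
leads into `d`.
-/

section Languages

variable {E : Type*}

lemma chainProd_append_singleton (w : List E → E → ℝ) :
    ∀ (rest pre : List E) (σ : E),
      chainProd w pre (rest ++ [σ]) = chainProd w pre rest * w (pre ++ rest) σ
  | [], pre, σ => by simp [chainProd]
  | τ :: rest, pre, σ => by
    simp [chainProd, chainProd_append_singleton w rest (pre ++ [τ]) σ, mul_assoc]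

lemma langOf_append_singleton (w : List E → E → ℝ) (s : List E) (σ : E) :
    langOf w (s ++ [σ]) = langOf w s * w s σ := by
  simpa [langOf] using chainProd_append_singleton w s [] σ

end Languages

namespace PDES

variable {X E : Type*} [Fintype E] (G : PDES X E)

lemma transStar_append_singleton (s : List E) (σ : E) :
    G.transStar (s ++ [σ]) = (G.transStar s).bind fun x => G.trans x σ := by
  simp [transStar, List.foldl_append]

lemma lang_append_singleton_of_transStar_eq_some {s : List E} {x : X}
    (hx : G.transStar s = some x) (σ : E) :
    G.lang (s ++ [σ]) = G.lang s * G.prob x σ := by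
  simp [lang, langOf_append_singleton, w, hx]

lemma lang_pos_of_transStar_eq_some {s : List E} {x : X} (hx : G.transStar s = some x) :
    0 < G.lang s := by
  induction s using List.reverseRecOn generalizing x with
  | nil => simp [lang, langOf, chainProd]
  | append_singleton s σ ih =>
    rw [transStar_append_singleton, Option.bind_eq_some_iff] at hx
    obtain ⟨y, hy, hyx⟩ := hx
    rw [G.lang_append_singleton_of_transStar_eq_some hy]
    exact mul_pos (ih hy) ((G.prob_pos_iff y σ).2 (by simp [hyx]))

end PDES

namespace TcReach

variable {X Q E : Type*} [Fintype E] {G : PDES X E} {H : PDES Q E} {Sc : Finset E}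

lemma exists_transStar {x : X} {q : Q} (h : TcReach G H Sc (.inl (x, q))) :
    ∃ s, G.transStar s = some x ∧ H.transStar s = some q := by
  generalize hst : (Sum.inl (x, q) : (X × Q) ⊕ Unit) = st at h
  induction h generalizing x q with
  | init =>
    cases hst
    exact ⟨[], rfl, rfl⟩
  | good y p y' p' σ _ hy hp _ ih =>
    cases hst
    obtain ⟨s, hGs, hHs⟩ := ih rfl
    exact ⟨s ++ [σ], by simp [G.transStar_append_singleton, hGs, hy],
      by simp [H.transStar_append_singleton, hHs, hp]⟩
  | bad => cases hst

variable (G H Sc) in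
lemma inl_or_inr_of_transStar {s : List E} {x : X} {q : Q}
    (hx : G.transStar s = some x) (hq : H.transStar s = some q) :
    TcReach G H Sc (.inl (x, q)) ∨ TcReach G H Sc (.inr ()) := by
  induction s using List.reverseRecOn generalizing x q with
  | nil =>
    cases hx
    cases hq
    exact .inl .init
  | append_singleton s σ ih =>
    rw [G.transStar_append_singleton, Option.bind_eq_some_iff] at hx
    rw [H.transStar_append_singleton, Option.bind_eq_some_iff] at hq
    obtain ⟨y, hy, hyx⟩ := hx
    obtain ⟨p, hp, hpq⟩ := hq
    refine (ih hy hp).elim (fun hyp => ?_) .inr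
    by_cases hσ : σ ∈ Sc
    · exact .inl (.good y p x q σ hyp hyx hpq (.inr hσ))
    by_cases heq : G.prob y σ = H.prob p σ
    · exact .inl (.good y p x q σ hyp hyx hpq (.inl ⟨hσ, heq⟩))
    · exact .inr (.bad y p σ hyp hσ heq)

end TcReach

theorem not_controllable_iff_d_reachable_general {X Q E : Type*} [Fintype E]
    (G : PDES X E) (H : PDES Q E) (Sc : Finset E) :
    ¬ AutControllable G H Sc ↔ TcReach G H Sc (Sum.inr ()) := by
  constructor
  · intro hnc
    simp only [AutControllable, not_forall] at hnc
    obtain ⟨s, -, x, q, hx, hq, σ, hσ, hne⟩ := hnc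
    exact (TcReach.inl_or_inr_of_transStar G H Sc hx hq).elim
      (fun hxq => .bad x q σ hxq hσ (Ne.symm hne)) id
  · intro hd hc
    cases hd with
    | bad x q σ hxq hσ hne =>
      obtain ⟨s, hx, hq⟩ := hxq.exists_transStar
      exact hne (hc s (H.lang_pos_of_transStar_eq_some hq) x q hx hq σ hσ).symm

/-- correctness of the controllability-verification algorithm. -/
theorem not_controllable_iff_d_reachable {X Q E : Type*} [Fintype E]
    (G : PDES X E) (H : PDES Q E) (Sc : Finset E)
    (hsub : PSub H.lang G.lang) :
    ¬ AutControllable G H Sc ↔ TcReach G H Sc (Sum.inr ()) :=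
  not_controllable_iff_d_reachable_general G H Sc
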